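/- Let D ⊆ [0,1] and δ, ε > 0 with δ < H^r(D). Suppose that for every set Z with λ(Z) < ε one has H^r(D \ Z) > H^r(D) − δ (i.e., Ξ_{δ,ε}(D,D) holds). Then there exists ε̄ > 0 such that for every set Z with λ(Z) < ε/2 one has H^r(D \ Z) > H^r(D) − (δ − ε̄) (i.e., Ξ_{δ−ε̄, ε/2}(D,D) holds). -/

import Mathlib

open MeasureTheory Set ENNReal

/-- The `r`-Hausdorff capacity of a set `X ⊆ ℝ`: the infimum of `∑ λ(I i)^r`
over all countable covers of `X` by closed intervals. -/
noncomputable def Hcap (r : ℝ) (X : Set ℝ) : ℝ≥0∞ :=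
  ⨅ (I : ℕ → Set ℝ) (_ : ∀ i, ∃ a b : ℝ, I i = Set.Icc a b) (_ : X ⊆ ⋃ i, I i),
    ∑' i, (volume (I i)) ^ r

/-- The relation `Ξ_{δ,ε}(X,Y)`: for every `Z` of Lebesgue (outer) measure less than `ε`,
`H^r(X ∩ Y \ Z) > H^r(Y) − δ` (phrased additively to avoid truncated subtraction). -/
def Xi (r δ ε : ℝ) (X Y : Set ℝ) : Prop :=
  ∀ Z : Set ℝ, volume Z < ENNReal.ofReal ε →
    Hcap r Y < Hcap r ((X ∩ Y) \ Z) + ENNReal.ofReal δ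

/-! Cover `D \ Z` by intervals of length at most `1` and cut off the top `θ`-fraction of each.
The cut-off pieces have total measure at most `θ` times the capacity sum, so adding them to `Z`
keeps it `ε`-small, and `Ξ_{δ,ε}(D,D)` for the enlarged set gives
`H^r(D) < (1-θ)^r H^r(D \ Z) + δ`. As `(1-θ)^r < 1`, this bounds `H^r(D \ Z)` below by
`H^r(D) - δ` plus a margin independent of `Z`. -/

lemma Hcap_le_tsum {r : ℝ} {X : Set ℝ} (a b : ℕ → ℝ) (hX : X ⊆ ⋃ i, Icc (a i) (b i)) :
    Hcap r X ≤ ∑' i, ENNReal.ofReal (b i - a i) ^ r := by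
  simp_rw [← Real.volume_Icc]
  exact iInf_le_of_le _ (iInf_le_of_le (fun i => ⟨a i, b i, rfl⟩) (iInf_le _ hX))

lemma exists_Icc_cover_of_Hcap_lt {r : ℝ} {X : Set ℝ} {c : ℝ≥0∞} (h : Hcap r X < c) :
    ∃ a b : ℕ → ℝ, X ⊆ ⋃ i, Icc (a i) (b i) ∧
      ∑' i, ENNReal.ofReal (b i - a i) ^ r < c := by
  simp only [Hcap, iInf_lt_iff] at h
  obtain ⟨I, hI, hX, hc⟩ := h
  choose a b hab using hI
  obtain rfl : I = fun i => Icc (a i) (b i) := funext hab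
  exact ⟨a, b, hX, by simpa only [Real.volume_Icc] using hc⟩

lemma Hcap_le_rpow_of_subset_Icc {r : ℝ} (hr : 0 < r) {X : Set ℝ} {a b : ℝ}
    (hX : X ⊆ Icc a b) : Hcap r X ≤ ENNReal.ofReal (b - a) ^ r := by
  refine (Hcap_le_tsum (fun _ => a) (fun i => if i = 0 then b else a)
    fun x hx => mem_iUnion.2 ⟨0, by simpa using hX hx⟩).trans_eq ?_
  rw [tsum_eq_single 0 fun i hi => by simp [hi, hr]]
  simp

lemma Hcap_le_one {r : ℝ} (hr : 0 < r) {X : Set ℝ} (hX : X ⊆ Icc 0 1) : Hcap r X ≤ 1 :=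
  (Hcap_le_rpow_of_subset_Icc hr hX).trans_eq (by simp)

lemma exists_short_Icc_cover_of_Hcap_lt {r : ℝ} (hr : 0 ≤ r) {X : Set ℝ} (hX : X ⊆ Icc 0 1)
    {c : ℝ≥0∞} (h : Hcap r X < c) :
    ∃ a b : ℕ → ℝ, (∀ i, b i - a i ≤ 1) ∧ X ⊆ ⋃ i, Icc (a i) (b i) ∧
      ∑' i, ENNReal.ofReal (b i - a i) ^ r < c := by
  obtain ⟨a, b, hcov, hsum⟩ := exists_Icc_cover_of_Hcap_lt h
  refine ⟨fun i => max (a i) 0, fun i => min (b i) 1,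
    fun i => (sub_le_sub (min_le_right _ _) (le_max_right _ _)).trans_eq (sub_zero 1), ?_, ?_⟩
  · intro x hx
    obtain ⟨i, hi⟩ := mem_iUnion.1 (hcov hx)
    exact mem_iUnion.2 ⟨i, max_le hi.1 (hX hx).1, le_min hi.2 (hX hx).2⟩
  · refine lt_of_le_of_lt (ENNReal.tsum_le_tsum fun i => ?_) hsum
    gcongr
    exacts [min_le_left _ _, le_max_left _ _]

-- `E` is the union of the top `θ`-fractions of the intervals of a short cover; its measure is
-- at most `θ ∑ λ(I i) ≤ θ ∑ λ(I i)^r` because `λ(I i) ≤ 1`.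
lemma exists_volume_le_and_Hcap_diff_le {r θ : ℝ} (hr0 : 0 ≤ r) (hr1 : r ≤ 1)
    (hθ0 : 0 ≤ θ) (hθ1 : θ ≤ 1) {X : Set ℝ} (hX : X ⊆ Icc 0 1) {c : ℝ≥0∞}
    (h : Hcap r X < c) :
    ∃ E : Set ℝ, volume E ≤ ENNReal.ofReal θ * c ∧
      Hcap r (X \ E) ≤ ENNReal.ofReal ((1 - θ) ^ r) * c := by
  obtain ⟨a, b, hab, hcov, hsum⟩ := exists_short_Icc_cover_of_Hcap_lt hr0 hX h
  set m : ℕ → ℝ := fun i => b i - θ * (b i - a i)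
  refine ⟨⋃ i, Icc (m i) (b i), ?_, ?_⟩
  · have hlen : ∀ i, ENNReal.ofReal (b i - a i) ≤ ENNReal.ofReal (b i - a i) ^ r := fun i => by
      simpa using ENNReal.rpow_le_rpow_of_exponent_ge (ENNReal.ofReal_le_one.2 (hab i)) hr1
    calc volume (⋃ i, Icc (m i) (b i))
        ≤ ∑' i, volume (Icc (m i) (b i)) := measure_iUnion_le _
      _ = ∑' i, ENNReal.ofReal θ * ENNReal.ofReal (b i - a i) := tsum_congr fun i => by
        rw [Real.volume_Icc, ← ENNReal.ofReal_mul hθ0]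
        congr 1; ring
      _ = ENNReal.ofReal θ * ∑' i, ENNReal.ofReal (b i - a i) := ENNReal.tsum_mul_left
      _ ≤ ENNReal.ofReal θ * c := by
        gcongr
        exact (ENNReal.tsum_le_tsum hlen).trans hsum.le
  · refine (Hcap_le_tsum a m ?_).trans ?_
    · rintro x ⟨hxX, hxE⟩
      obtain ⟨i, hi⟩ := mem_iUnion.1 (hcov hxX)
      exact mem_iUnion.2 ⟨i, hi.1, not_lt.1 fun hlt => hxE (mem_iUnion.2 ⟨i, hlt.le, hi.2⟩)⟩
    · calc ∑' i, ENNReal.ofReal (m i - a i) ^ r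
          = ∑' i, ENNReal.ofReal ((1 - θ) ^ r) * ENNReal.ofReal (b i - a i) ^ r :=
          tsum_congr fun i => by
            rw [show m i - a i = (1 - θ) * (b i - a i) by ring,
              ENNReal.ofReal_mul (by linarith), ENNReal.mul_rpow_of_nonneg _ _ hr0,
              ENNReal.ofReal_rpow_of_nonneg (by linarith) hr0]
        _ = ENNReal.ofReal ((1 - θ) ^ r) * ∑' i, ENNReal.ofReal (b i - a i) ^ r :=
            ENNReal.tsum_mul_left
        _ ≤ ENNReal.ofReal ((1 - θ) ^ r) * c := by gcongr

lemma Hcap_lt_of_Xi {r θ δ ε : ℝ} (hr0 : 0 < r) (hr1 : r ≤ 1) (hθ0 : 0 ≤ θ)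
    (hθ : θ ≤ 1 / 2) (hθε : θ ≤ ε / 8) {D Z : Set ℝ} (hD : D ⊆ Icc 0 1)
    (hXi : Xi r δ ε D D) (hZ : volume Z < ENNReal.ofReal (ε / 2)) {c : ℝ≥0∞}
    (hc : Hcap r (D \ Z) < c) :
    Hcap r D < ENNReal.ofReal ((1 - θ) ^ r) * c + ENNReal.ofReal δ := by
  rcases le_or_gt 4 c with hc4 | hc4
  · have hk : ENNReal.ofReal (1 / 2) ≤ ENNReal.ofReal ((1 - θ) ^ r) :=
      ENNReal.ofReal_le_ofReal <| (by linarith : 1 / 2 ≤ 1 - θ).trans <| by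
        simpa using Real.rpow_le_rpow_of_exponent_ge (x := 1 - θ) (by linarith) (by linarith) hr1
    calc Hcap r D ≤ 1 := Hcap_le_one hr0 hD
      _ < ENNReal.ofReal (1 / 2) * 4 := by
        rw [← ENNReal.ofReal_ofNat 4, ← ENNReal.ofReal_mul (by norm_num)]
        norm_num
      _ ≤ ENNReal.ofReal ((1 - θ) ^ r) * c := by gcongr
      _ ≤ _ := le_self_add
  · obtain ⟨E, hE, hDE⟩ := exists_volume_le_and_Hcap_diff_le hr0.le hr1 hθ0 (by linarith)
      (sdiff_subset.trans hD) hc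
    have hE' : volume E ≤ ENNReal.ofReal (ε / 2) := calc
      volume E ≤ ENNReal.ofReal θ * c := hE
      _ ≤ ENNReal.ofReal (ε / 8) * 4 := by gcongr
      _ = ENNReal.ofReal (ε / 2) := by
        rw [← ENNReal.ofReal_ofNat 4, ← ENNReal.ofReal_mul (by linarith)]
        ring_nf
    have hZE : volume (Z ∪ E) < ENNReal.ofReal ε := calc
      volume (Z ∪ E) ≤ volume Z + volume E := measure_union_le _ _
      _ < ENNReal.ofReal (ε / 2) + ENNReal.ofReal (ε / 2) :=
        ENNReal.add_lt_add_of_lt_of_le (ne_top_of_le_ne_top ofReal_ne_top hE') hZ hE'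
      _ = ENNReal.ofReal ε := by
        rw [← ENNReal.ofReal_add (by linarith) (by linarith)]
        ring_nf
    calc Hcap r D < Hcap r ((D ∩ D) \ (Z ∪ E)) + ENNReal.ofReal δ := hXi _ hZE
      _ = Hcap r ((D \ Z) \ E) + ENNReal.ofReal δ := by rw [inter_self, Set.sdiff_sdiff]
      _ ≤ _ := by gcongr

theorem Xi_improve (r : ℝ) (hr0 : 0 < r) (hr1 : r < 1)
    (D : Set ℝ) (hD : D ⊆ Set.Icc 0 1) (δ ε : ℝ) (hδ : 0 < δ) (hε : 0 < ε)
    (hδH : ENNReal.ofReal δ < Hcap r D) (hXi : Xi r δ ε D D) :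
    ∃ εbar > 0, Xi r (δ - εbar) (ε / 2) D D := by
  set θ := min (ε / 8) (1 / 2)
  have hθ0 : 0 < θ := lt_min (by linarith) (by norm_num)
  have hθ1 : θ < 1 := (min_le_right _ _).trans_lt (by norm_num)
  set k := (1 - θ) ^ r
  have hk0 : 0 < k := Real.rpow_pos_of_pos (by linarith) r
  have hk1 : k < 1 := Real.rpow_lt_one (by linarith) (by linarith) hr0
  have hfin : Hcap r D ≠ ⊤ := ((Hcap_le_one hr0 hD).trans_lt one_lt_top).ne
  set η := (Hcap r D).toReal - δ
  have hη : 0 < η := sub_pos.2 ((ENNReal.ofReal_lt_iff_lt_toReal hδ.le hfin).1 hδH)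
  have hHcap : Hcap r D = ENNReal.ofReal (η + δ) := by simp [η, hfin]
  have hlower : ∀ Z, volume Z < ENNReal.ofReal (ε / 2) →
      ENNReal.ofReal (η / k) ≤ Hcap r (D \ Z) := by
    intro Z hZ
    by_contra! hlt
    have := Hcap_lt_of_Xi hr0 hr1.le hθ0.le (min_le_right _ _) (min_le_left _ _) hD hXi hZ hlt
    rw [← ENNReal.ofReal_mul hk0.le, mul_div_cancel₀ _ hk0.ne',
      ← ENNReal.ofReal_add hη.le hδ.le, ← hHcap] at this
    exact this.false
  have hgap : η < η / k := (lt_div_iff₀ hk0).2 (mul_lt_of_lt_one_right hη hk1)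
  set εbar := min (η / k - η) δ / 2 with hεbar_def
  have hεbar : 0 < εbar := half_pos (lt_min (by linarith) hδ)
  have hεbar_gap : εbar < η / k - η := by linarith [min_le_left (η / k - η) δ, hεbar_def]
  have hεbarδ : εbar < δ := by linarith [min_le_right (η / k - η) δ, hεbar_def]
  refine ⟨εbar, hεbar, fun Z hZ => ?_⟩
  calc Hcap r D = ENNReal.ofReal (η + δ) := hHcap
    _ < ENNReal.ofReal (η / k + (δ - εbar)) :=
      (ENNReal.ofReal_lt_ofReal_iff (by linarith)).2 (by linarith)
    _ = ENNReal.ofReal (η / k) + ENNReal.ofReal (δ - εbar) :=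
      ENNReal.ofReal_add (by linarith) (by linarith)
    _ ≤ Hcap r ((D ∩ D) \ Z) + ENNReal.ofReal (δ - εbar) := by
      rw [inter_self]
      gcongr
      exact hlower Z hZ
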